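/- arXiv:1808.03116 — 2 statements merged into one kernel-verified Lean document; each statement's English description precedes it below -/
import Mathlib

section
/- The Jacobiator J(X,Y,Z) = [X,[Y,Z]_{E₀}]_{E₀} + [Y,[Z,X]_{E₀}]_{E₀} + [Z,[X,Y]_{E₀}]_{E₀} of the bracket [·,·]_{E₀} takes the following values on generators: J(X₁¹, X₂¹, X₂²) = 0, J(X₁¹, X₁², X₂²) = 0, J(X₁¹, X₂¹, X₁²) = 2𝒳₂, and J(X₂¹, X₁², X₂²) = 2𝒳₁. In particular the bracket [·,·]_{E₀} does not satisfy the Jacobi identity. -/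
/-
Expanding each double bracket of generators with the Leibniz rule turns the Jacobiator into an
explicit combination of generators with polynomial coefficients; besides products of the structure
functions `2xᵏ`, it contains the anchor terms `ρ(X_j^i)(2xᵐ) = 2(xⁱ)² δ_j^m`, and these are what
survive in `2𝒳₁` and `2𝒳₂`. Evaluating the (1,2) entry of `2𝒳₂` at the point `(0,1)` gives `2`,
so the Jacobi identity fails.
-/

noncomputable section

set_option maxHeartbeats 1000000
set_option synthInstance.maxHeartbeats 400000

open Matrix

/-- The ℝ-algebra of smooth (C^∞) functions on ℝ². -/
def Sm : Subalgebra ℝ ((ℝ × ℝ) → ℝ) where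
  carrier := {f | ContDiff ℝ (⊤ : ℕ∞) f}
  mul_mem' := fun {a b} (hf : ContDiff ℝ (⊤ : ℕ∞) a) (hg : ContDiff ℝ (⊤ : ℕ∞) b) => hf.mul hg
  add_mem' := fun {a b} (hf : ContDiff ℝ (⊤ : ℕ∞) a) (hg : ContDiff ℝ (⊤ : ℕ∞) b) => hf.add hg
  algebraMap_mem' r :=
    show ContDiff ℝ (⊤ : ℕ∞) (algebraMap ℝ ((ℝ × ℝ) → ℝ) r) from contDiff_const

/-- Smooth functions on the plane. -/
abbrev S : Type := Sm

lemma mem_Sm_iff {f : (ℝ × ℝ) → ℝ} : f ∈ Sm ↔ ContDiff ℝ (⊤ : ℕ∞) f := by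
  rw [Sm]; rfl

lemma smooth_coe (f : S) : ContDiff ℝ (⊤ : ℕ∞) (f : (ℝ × ℝ) → ℝ) := mem_Sm_iff.mp f.2

/-- Sections of the trivial bundle `ℝ² × M₂(ℝ)`, as 2×2 matrices of smooth functions. -/
abbrev E₀ : Type := Matrix (Fin 2) (Fin 2) S

/-- The section `X_j^i`: the constant elementary matrix with 1 in entry (i,j). -/
def sb (i j : Fin 2) : E₀ := Matrix.single i j 1

/-- First coordinate function. -/
def x₁ : S := ⟨fun p => p.1, mem_Sm_iff.mpr contDiff_fst⟩
/-- Second coordinate function. -/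
def x₂ : S := ⟨fun p => p.2, mem_Sm_iff.mpr contDiff_snd⟩
/-- Coordinates. -/
def xc : Fin 2 → S := ![x₁, x₂]

/-- Directional derivative of a smooth function, in direction `v`. -/
def pdAux (v : ℝ × ℝ) (f : S) : S :=
  ⟨fun p => fderiv ℝ (f : (ℝ × ℝ) → ℝ) p v,
    mem_Sm_iff.mpr (((smooth_coe f).fderiv_right (le_refl _)).clm_apply contDiff_const)⟩

/-- The vector field (derivation) `∂/∂v` on `ℝ²`. -/
def pd (v : ℝ × ℝ) : Derivation ℝ S S where
  toFun := pdAux v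
  map_add' f g := by
    ext p
    have hf : DifferentiableAt ℝ (f : (ℝ × ℝ) → ℝ) p :=
      ((smooth_coe f).differentiable (by simp)).differentiableAt
    have hg : DifferentiableAt ℝ (g : (ℝ × ℝ) → ℝ) p :=
      ((smooth_coe g).differentiable (by simp)).differentiableAt
    have h1 : ((f + g : S) : (ℝ × ℝ) → ℝ) = fun q => (f : (ℝ × ℝ) → ℝ) q + (g : (ℝ × ℝ) → ℝ) q := rfl
    simp only [pdAux, h1, AddMemClass.coe_add, Pi.add_apply]
    rw [fderiv_fun_add hf hg]
    simp
  map_smul' c f := by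
    ext p
    have h1 : ((c • f : S) : (ℝ × ℝ) → ℝ) = fun q => c * (f : (ℝ × ℝ) → ℝ) q := rfl
    have hf : DifferentiableAt ℝ (f : (ℝ × ℝ) → ℝ) p :=
      ((smooth_coe f).differentiable (by simp)).differentiableAt
    simp only [pdAux]
    rw [h1, fderiv_const_mul hf]
    simp
  map_one_eq_zero' := by
    ext p
    have h1 : ((1 : S) : (ℝ × ℝ) → ℝ) = fun _ => (1 : ℝ) := rfl
    have h2 : fderiv ℝ (1 : (ℝ × ℝ) → ℝ) p = 0 := fderiv_const_apply 1
    simp [pdAux, h1, h2]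
  leibniz' f g := by
    ext p
    have hf : DifferentiableAt ℝ (f : (ℝ × ℝ) → ℝ) p :=
      ((smooth_coe f).differentiable (by simp)).differentiableAt
    have hg : DifferentiableAt ℝ (g : (ℝ × ℝ) → ℝ) p :=
      ((smooth_coe g).differentiable (by simp)).differentiableAt
    have h1 : ((f * g : S) : (ℝ × ℝ) → ℝ) = fun q => (f : (ℝ × ℝ) → ℝ) q * (g : (ℝ × ℝ) → ℝ) q := rfl
    simp [pdAux, h1, fderiv_fun_mul hf hg]
    try ring

/-- Standard basis vectors of ℝ². -/
def ev : Fin 2 → ℝ × ℝ := ![(1, 0), (0, 1)]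

/-- The anchor `ρ` of `E₀`: `ρ(X_j^i) = (x^i)² ∂/∂x^j`, extended `C^∞(ℝ²)`-linearly. -/
def anchor (X : E₀) : Derivation ℝ S S :=
  ∑ i : Fin 2, ∑ j : Fin 2, (X i j * xc i ^ 2) • pd (ev j)

/-- The section `𝒳₁ = (x²)² X₁¹ − (x¹)² X₁²`. -/
def 𝓧₁ : E₀ := x₂ ^ 2 • sb 0 0 - x₁ ^ 2 • sb 1 0
/-- The section `𝒳₂ = (x²)² X₂¹ − (x¹)² X₂²`. -/
def 𝓧₂ : E₀ := x₂ ^ 2 • sb 0 1 - x₁ ^ 2 • sb 1 1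

/-- The almost Lie bracket axioms for `(E₀, ρ)`, together with the defining values
`[X_j^i, X_l^k] = 2x^k δ_j^k X_l^i − 2x^i δ_l^i X_j^k` on the generators: ℝ-bilinearity,
skew-symmetry, the Leibniz rule, and the values on generators. -/
def IsBracket (L : E₀ → E₀ → E₀) : Prop :=
  (∀ X X' Y, L (X + X') Y = L X Y + L X' Y) ∧
  (∀ X Y Y', L X (Y + Y') = L X Y + L X Y') ∧
  (∀ (c : ℝ) (X Y : E₀), L (c • X) Y = c • L X Y) ∧
  (∀ (c : ℝ) (X Y : E₀), L X (c • Y) = c • L X Y) ∧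
  (∀ X Y, L Y X = - L X Y) ∧
  (∀ (f : S) (X Y : E₀), L X (f • Y) = anchor X f • Y + f • L X Y) ∧
  (∀ i j k l, L (sb i j) (sb k l) =
    (if j = k then (2 : S) * xc k else 0) • sb i l
      - (if l = i then (2 : S) * xc i else 0) • sb k j)

/-- The Jacobiator of a bracket. -/
def Jac (L : E₀ → E₀ → E₀) (X Y Z : E₀) : E₀ := L X (L Y Z) + L Y (L Z X) + L Z (L X Y)

lemma pd_xc (j k : Fin 2) : pd (ev j) (xc k) = if j = k then 1 else 0 := by
  fin_cases j <;> fin_cases k <;>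
  · apply Subtype.ext
    funext p
    simp [pd, pdAux, xc, x₁, x₂, ev, fderiv_fst, fderiv_snd]

lemma Derivation.map_two_mul {R A : Type*} [CommSemiring R] [CommSemiring A] [Algebra R A]
    (D : Derivation R A A) (f : A) : D (2 * f) = 2 * D f := by
  rw [D.leibniz, ← Nat.cast_ofNat, D.map_natCast, smul_zero, add_zero, smul_eq_mul]

lemma anchor_sb (i j : Fin 2) (f : S) : anchor (sb i j) f = xc i ^ 2 * pd (ev j) f := by
  fin_cases i <;> fin_cases j <;> simp [anchor, sb, Fin.sum_univ_two]

lemma two_smul_𝓧₂_ne_zero : (2 : S) • 𝓧₂ ≠ 0 := by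
  intro h
  have := congrArg (fun X : E₀ => (X 0 1 : (ℝ × ℝ) → ℝ) (0, 1)) h
  norm_num [𝓧₂, sb, x₁, x₂] at this
  rw [show ((2 : S) : (ℝ × ℝ) → ℝ) = 2 from rfl] at this
  norm_num at this

namespace IsBracket

variable {L : E₀ → E₀ → E₀}

lemma map_sub_right (hL : IsBracket L) (X Y Z : E₀) : L X (Y - Z) = L X Y - L X Z :=
  (AddMonoidHom.mk' (L X) (hL.2.1 X)).map_sub Y Z

lemma leibniz (hL : IsBracket L) (f : S) (X Y : E₀) :
    L X (f • Y) = anchor X f • Y + f • L X Y :=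
  hL.2.2.2.2.2.1 f X Y

lemma map_zero_right (hL : IsBracket L) (X : E₀) : L X 0 = 0 :=
  (AddMonoidHom.mk' (L X) (hL.2.1 X)).map_zero

lemma sb_sb (hL : IsBracket L) (i j k l : Fin 2) : L (sb i j) (sb k l) =
    (if j = k then (2 : S) * xc k else 0) • sb i l
      - (if l = i then (2 : S) * xc i else 0) • sb k j :=
  hL.2.2.2.2.2.2 i j k l

lemma sb_two_mul_xc_smul (hL : IsBracket L) (i j m : Fin 2) (Y : E₀) :
    L (sb i j) (((2 : S) * xc m) • Y) =
      (if j = m then (2 : S) * xc i ^ 2 else 0) • Y + ((2 : S) * xc m) • L (sb i j) Y := by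
  rw [hL.leibniz, anchor_sb, Derivation.map_two_mul, pd_xc]
  split_ifs <;> ring_nf

lemma sb_bracket_sb_sb (hL : IsBracket L) (i j k l m n : Fin 2) :
    L (sb i j) (L (sb k l) (sb m n)) =
      (if l = m then (if j = m then (2 : S) * xc i ^ 2 else 0) • sb k n
          + ((2 : S) * xc m) • L (sb i j) (sb k n) else 0)
        - (if n = k then (if j = k then (2 : S) * xc i ^ 2 else 0) • sb m l
          + ((2 : S) * xc k) • L (sb i j) (sb m l) else 0) := by
  rw [hL.sb_sb k l m n, hL.map_sub_right]
  congr 1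
  · by_cases h : l = m <;>
      simp only [h, if_true, if_false, hL.sb_two_mul_xc_smul, zero_smul, hL.map_zero_right]
  · by_cases h : n = k <;>
      simp only [h, if_true, if_false, hL.sb_two_mul_xc_smul, zero_smul, hL.map_zero_right]

end IsBracket

/-- values of the Jacobiator of `[·,·]_{E₀}` on generators; in particular
the bracket does not satisfy the Jacobi identity. -/
theorem statement3 (L : E₀ → E₀ → E₀) (hL : IsBracket L) :
    Jac L (sb 0 0) (sb 0 1) (sb 1 1) = 0 ∧
    Jac L (sb 0 0) (sb 1 0) (sb 1 1) = 0 ∧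
    Jac L (sb 0 0) (sb 0 1) (sb 1 0) = (2 : S) • 𝓧₂ ∧
    Jac L (sb 0 1) (sb 1 0) (sb 1 1) = (2 : S) • 𝓧₁ ∧
    ¬ (∀ X Y Z : E₀, Jac L X Y Z = 0) := by
  have jac_sb00_sb01_sb10 : Jac L (sb 0 0) (sb 0 1) (sb 1 0) = (2 : S) • 𝓧₂ := by
    simp only [Jac, hL.sb_bracket_sb_sb]
    simp only [hL.sb_sb, 𝓧₂, xc, zero_ne_one, one_ne_zero, ↓reduceIte,
      cons_val_zero, cons_val_one, cons_val_fin_one]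
    module
  refine ⟨?_, ?_, jac_sb00_sb01_sb10, ?_,
    fun hJacobi => two_smul_𝓧₂_ne_zero (jac_sb00_sb01_sb10 ▸ hJacobi _ _ _)⟩ <;>
  · simp only [Jac, hL.sb_bracket_sb_sb]
    simp only [hL.sb_sb, 𝓧₁, xc, zero_ne_one, one_ne_zero, ↓reduceIte,
      cons_val_zero, cons_val_one, cons_val_fin_one]
    module
end
end

section
/- A section X of E₀ satisfies ρ(X) = 0 if and only if there exist smooth functions f, g ∈ C^∞(ℝ²) such that X = f·𝒳₁ + g·𝒳₂, where 𝒳₁ = (x²)² X₁¹ − (x¹)² X₁² and 𝒳₂ = (x²)² X₂¹ − (x¹)² X₂². That is, the kernel of the anchor ρ on sections is exactly the C^∞(ℝ²)-submodule generated by 𝒳₁ and 𝒳₂. -/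
noncomputable section

set_option maxHeartbeats 1000000
set_option synthInstance.maxHeartbeats 400000

open Matrix

/-!
A section `X` lies in the kernel of `ρ` iff each column `(a, b)` of `X` satisfies
`a (x¹)² + b (x²)² = 0`, so the theorem amounts to computing the module of smooth syzygies of
`((x¹)², (x²)²)`: it is generated by the Koszul syzygy `((x²)², -(x¹)²)`. Given a syzygy, `a`
vanishes on the line `x² = 0`, hence `a = x² g` by Hadamard's lemma, and `g (x¹)² + b x² = 0`
off that line, hence everywhere by continuity. Repeating the argument with `(g, b)` gives
`g = x² f` and `b = -f (x¹)²`.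
-/

open scoped ContDiff

universe u

section ParametricIntegral

variable {H E : Type u} [NormedAddCommGroup H] [NormedSpace ℝ H] [ProperSpace H]
  [NormedAddCommGroup E] [NormedSpace ℝ E]

open Metric Set in
lemma hasFDerivAt_parametric_intervalIntegral {G : H × ℝ → E} (hG : ContDiff ℝ 1 G)
    (a b : ℝ) (x₀ : H) :
    HasFDerivAt (fun x => ∫ t in a..b, G (x, t))
      (∫ t in a..b, fderiv ℝ G (x₀, t) ∘L ContinuousLinearMap.inl ℝ H ℝ) x₀ := by
  have hGc : Continuous G := hG.continuous
  have hG'c : Continuous fun p => fderiv ℝ G p ∘L ContinuousLinearMap.inl ℝ H ℝ :=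
    (hG.continuous_fderiv one_ne_zero).clm_comp continuous_const
  obtain ⟨M, hM⟩ := ((isCompact_closedBall x₀ 1).prod isCompact_uIcc).exists_bound_of_continuousOn
    hG'c.continuousOn
  refine hasFDerivAt_integral_of_dominated_of_fderiv_le'' (bound := fun _ => M)
    (F' := fun x t => fderiv ℝ G (x, t) ∘L ContinuousLinearMap.inl ℝ H ℝ)
    (ball_mem_nhds x₀ one_pos) (.of_forall fun x => ?_) ?_ ?_ ?_ intervalIntegrable_const ?_
  · exact (hGc.comp (Continuous.prodMk_right x)).aestronglyMeasurable
  · exact (hGc.comp (Continuous.prodMk_right x₀)).intervalIntegrable a b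
  · exact (hG'c.comp (Continuous.prodMk_right x₀)).aestronglyMeasurable
  · refine (MeasureTheory.ae_restrict_mem measurableSet_uIoc).mono fun t ht x hx => hM _ ?_
    exact ⟨ball_subset_closedBall hx, uIoc_subset_uIcc ht⟩
  · refine .of_forall fun t x _ => ?_
    exact (hG.differentiable one_ne_zero (x, t)).hasFDerivAt.comp x (hasFDerivAt_prodMk_left x t)

-- `H` and `E` share a universe so that the induction can replace `E` by `H →L[ℝ] E`.
lemma contDiff_parametric_intervalIntegral [CompleteSpace E] {n : ℕ} {G : H × ℝ → E}
    (hG : ContDiff ℝ n G) (a b : ℝ) : ContDiff ℝ n fun x => ∫ t in a..b, G (x, t) := by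
  induction n generalizing E with
  | zero =>
    rw [Nat.cast_zero, contDiff_zero] at hG ⊢
    exact intervalIntegral.continuous_parametric_intervalIntegral_of_continuous'
      (f := fun x t => G (x, t)) hG a b
  | succ n ih =>
    have hderiv := hasFDerivAt_parametric_intervalIntegral (hG.of_le (by simp)) a b
    rw [Nat.cast_succ, contDiff_succ_iff_fderiv]
    refine ⟨fun x => (hderiv x).differentiableAt, by simp, ?_⟩
    rw [funext fun x => (hderiv x).fderiv]
    exact ih (E := H →L[ℝ] E) ((hG.fderiv_right (by simp)).clm_comp contDiff_const)

lemma contDiff_infty_parametric_intervalIntegral [CompleteSpace E] {G : H × ℝ → E}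
    (hG : ContDiff ℝ ∞ G) (a b : ℝ) : ContDiff ℝ ∞ fun x => ∫ t in a..b, G (x, t) :=
  contDiff_infty.mpr fun _ => contDiff_parametric_intervalIntegral (hG.of_le (by exact_mod_cast le_top)) a b

-- Hadamard's lemma: `g (x, y) = ∫₀¹ ∂a/∂y (x, t y) dt`.
lemma ContDiff.exists_eq_snd_smul [CompleteSpace E] {a : H × ℝ → E} (ha : ContDiff ℝ ∞ a)
    (h0 : ∀ x, a (x, 0) = 0) : ∃ g : H × ℝ → E, ContDiff ℝ ∞ g ∧ ∀ p, a p = p.2 • g p := by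
  set D : H × ℝ → E := fun p => fderiv ℝ a p (0, 1)
  have hD : ContDiff ℝ ∞ D := (ha.fderiv_right le_rfl).clm_apply contDiff_const
  refine ⟨fun p => ∫ t in (0 : ℝ)..1, D (p.1, t * p.2), contDiff_infty_parametric_intervalIntegral
      (hD.comp (f := fun q : (H × ℝ) × ℝ => (q.1.1, q.2 * q.1.2)) (by fun_prop)) 0 1, ?_⟩
  rintro ⟨x, y⟩
  have hderiv (t : ℝ) : HasDerivAt (fun s : ℝ => a (x, s * y)) (y • D (x, t * y)) t := by
    have hline : HasDerivAt (fun s : ℝ => (x, s * y)) (y • ((0 : H), (1 : ℝ))) t := by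
      simpa using (hasDerivAt_const t x).prodMk ((hasDerivAt_id t).mul_const y)
    exact ((ha.differentiable (by simp) _).hasFDerivAt.comp_hasDerivAt t hline).congr_deriv
      (map_smul _ _ _)
  have hDc : Continuous D := hD.continuous
  have hftc := intervalIntegral.integral_eq_sub_of_hasDerivAt (fun t _ => hderiv t)
    ((by fun_prop : Continuous fun t : ℝ => y • D (x, t * y)).intervalIntegrable 0 1)
  simpa [h0, intervalIntegral.integral_smul] using hftc.symm

end ParametricIntegral

lemma Continuous.eq_zero_of_mul_eq_zero {X : Type*} [TopologicalSpace X] {φ f : X → ℝ}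
    (hf : Continuous f) (hφ : Dense {x | φ x ≠ 0}) (h : ∀ x, φ x * f x = 0) : f = 0 :=
  hf.ext_on hφ continuous_const fun x hx => (mul_eq_zero.mp (h x)).resolve_left hx

lemma exists_eq_snd_mul_of_mul_fst_pow_add_eq_zero {a b : ℝ × ℝ → ℝ} (ha : ContDiff ℝ ∞ a)
    (hb : Continuous b) {m n : ℕ} (h : ∀ p, a p * p.1 ^ m + b p * p.2 ^ (n + 1) = 0) :
    ∃ g : ℝ × ℝ → ℝ, ContDiff ℝ ∞ g ∧ (∀ p, a p = p.2 * g p) ∧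
      ∀ p, g p * p.1 ^ m + b p * p.2 ^ n = 0 := by
  have ha0 : (fun x => a (x, 0)) = 0 := by
    refine Continuous.eq_zero_of_mul_eq_zero (φ := fun x => x ^ m) (by fun_prop)
      ((dense_compl_singleton 0).mono fun x hx => pow_ne_zero m hx) fun x => ?_
    simpa [mul_comm] using h (x, 0)
  obtain ⟨g, hg, hag⟩ := ha.exists_eq_snd_smul (congrFun ha0)
  have hgc : Continuous g := hg.continuous
  refine ⟨g, hg, hag, congrFun (Continuous.eq_zero_of_mul_eq_zero (φ := Prod.snd) (by fun_prop)
    ((dense_compl_singleton 0).preimage isOpenMap_snd) fun p => ?_)⟩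
  rw [← h p, hag p, smul_eq_mul]
  ring

lemma syzygy_x₁_sq_x₂_sq {a b : S} (h : a * x₁ ^ 2 + b * x₂ ^ 2 = 0) :
    ∃ f : S, a = f * x₂ ^ 2 ∧ b = -(f * x₁ ^ 2) := by
  have hab (p : ℝ × ℝ) : (a : ℝ × ℝ → ℝ) p * p.1 ^ 2 + (b : ℝ × ℝ → ℝ) p * p.2 ^ (1 + 1) = 0 :=
    congrFun (congrArg Subtype.val h) p
  have hb : Continuous (b : ℝ × ℝ → ℝ) := (smooth_coe b).continuous
  obtain ⟨g, hg, hag, hgb⟩ := exists_eq_snd_mul_of_mul_fst_pow_add_eq_zero (smooth_coe a) hb hab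
  obtain ⟨f, hf, hgf, hfb⟩ :=
    exists_eq_snd_mul_of_mul_fst_pow_add_eq_zero (n := 0) hg hb (by simpa using hgb)
  refine ⟨⟨f, mem_Sm_iff.mpr hf⟩, Subtype.ext (funext fun p => ?_),
    Subtype.ext (funext fun p => ?_)⟩
  · change _ = f p * p.2 ^ 2
    rw [hag, hgf]
    ring
  · change _ = -(f p * p.1 ^ 2)
    linarith [hfb p, pow_zero p.2]

lemma pd_x₁ (v : ℝ × ℝ) : pd v x₁ = algebraMap ℝ S v.1 :=
  Subtype.ext (funext fun p => by simp [pd, pdAux, x₁, fderiv_fst])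

lemma pd_x₂ (v : ℝ × ℝ) : pd v x₂ = algebraMap ℝ S v.2 :=
  Subtype.ext (funext fun p => by simp [pd, pdAux, x₂, fderiv_snd])

lemma anchor_apply (X : E₀) (h : S) :
    anchor X h = ∑ j, (X 0 j * x₁ ^ 2 + X 1 j * x₂ ^ 2) * pd (ev j) h := by
  simp only [anchor, Fin.sum_univ_two, Derivation.add_apply, Derivation.smul_apply, xc,
    cons_val_zero, cons_val_one, smul_eq_mul]
  ring

lemma anchor_eq_zero_iff (X : E₀) :
    anchor X = 0 ↔ ∀ j, X 0 j * x₁ ^ 2 + X 1 j * x₂ ^ 2 = 0 := by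
  constructor
  · intro h
    refine Fin.forall_fin_two.mpr ⟨?_, ?_⟩
    · simpa [anchor_apply, pd_x₁, ev] using DFunLike.congr_fun h x₁
    · simpa [anchor_apply, pd_x₂, ev] using DFunLike.congr_fun h x₂
  · intro h
    ext f
    simp [anchor_apply, h]

lemma smul_𝓧₁_add_smul_𝓧₂ (f g : S) :
    f • 𝓧₁ + g • 𝓧₂ = !![f * x₂ ^ 2, g * x₂ ^ 2; -(f * x₁ ^ 2), -(g * x₁ ^ 2)] := by
  ext i j
  fin_cases i <;> fin_cases j <;> simp [𝓧₁, 𝓧₂, sb, Matrix.single]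

/-- the kernel of the anchor `ρ` on sections of `E₀` is exactly the
`C^∞(ℝ²)`-submodule generated by `𝒳₁` and `𝒳₂`. -/
theorem statement4 (X : E₀) :
    anchor X = 0 ↔ ∃ f g : S, X = f • 𝓧₁ + g • 𝓧₂ := by
  rw [anchor_eq_zero_iff, Fin.forall_fin_two]
  constructor
  · rintro ⟨h₀, h₁⟩
    obtain ⟨f, hf₀, hf₁⟩ := syzygy_x₁_sq_x₂_sq h₀
    obtain ⟨g, hg₀, hg₁⟩ := syzygy_x₁_sq_x₂_sq h₁
    exact ⟨f, g, by rw [smul_𝓧₁_add_smul_𝓧₂, eta_fin_two X, hf₀, hf₁, hg₀, hg₁]⟩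
  · rintro ⟨f, g, rfl⟩
    simp only [smul_𝓧₁_add_smul_𝓧₂, of_apply, cons_val', cons_val_zero, cons_val_one,
      empty_val', cons_val_fin_one]
    constructor <;> ring
end
end
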